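/- Let C be a commutative monoid and M a left H(C)-module. The assignment G^*(C, M)([n]) = ∏_{(a_1,...,a_n) ∈ C^n} M(a_1⋯a_n), with action on a pointed map f : [n] → [m] given by (f^*ξ)(a_1,...,a_n) = (b_0)_*(ξ(b_1,...,b_m)) where b_j = ∏_{i: f(i)=j} a_i, is a well-defined right Γ-module, i.e., a contravariant functor from Γ to K-modules. -/

import Mathlib

open CategoryTheory

set_option maxHeartbeats 1000000
set_option synthInstance.maxHeartbeats 1000000

def HCat (C : Type) := C
def HCat.of {C : Type} : C → HCat C := id
def HCat.un {C : Type} : HCat C → C := id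

instance (C : Type) [CommMonoid C] : Category (HCat C) where
  Hom a b := {c : C // c * a.un = b.un}
  id a := ⟨1, one_mul a.un⟩
  comp f g := ⟨g.1 * f.1, by rw [mul_assoc, f.2, g.2]⟩
  id_comp f := Subtype.ext (mul_one f.1)
  comp_id f := Subtype.ext (one_mul f.1)
  assoc f g h := Subtype.ext (mul_assoc h.1 g.1 f.1).symm

abbrev GammaCat := ℕ

instance : Category GammaCat where
  Hom n m := {f : Fin (n+1) → Fin (m+1) // f 0 = 0}
  id n := ⟨id, rfl⟩
  comp f g := ⟨g.1 ∘ f.1, by simp [f.2, g.2]⟩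
  id_comp f := rfl
  comp_id f := rfl
  assoc f g h := rfl

variable (C : Type) [CommMonoid C] (K : Type) [CommRing K]

/-- Left `H(C)`-modules valued in `K`-modules. -/
abbrev LeftHModK := HCat C ⥤ ModuleCat K

/-- `G^*(C,M)([n]) = ∏_{(a_1,...,a_n) ∈ C^n} M(a_1 ⋯ a_n)`. -/
def GcoObj (M : LeftHModK C K) (n : ℕ) : Type :=
  ∀ v : Fin n → C, M.obj (HCat.of (∏ i, v i))

noncomputable instance (M : LeftHModK C K) (n : ℕ) : AddCommGroup (GcoObj C K M n) :=
  Pi.addCommGroup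

noncomputable instance (M : LeftHModK C K) (n : ℕ) : Module K (GcoObj C K M n) :=
  Pi.module _ _ _

/-- `b_j = ∏_{i : f(i) = j} a_i` for a pointed map `f : [n] → [m]` and a tuple `a`. -/
def bProd {n m : ℕ} (f : (n : GammaCat) ⟶ (m : GammaCat)) (v : Fin n → C)
    (j : Fin (m+1)) : C :=
  ∏ i ∈ Finset.univ.filter (fun i : Fin n => f.1 i.succ = j), v i

theorem bProd_mul {n m : ℕ} (f : (n : GammaCat) ⟶ (m : GammaCat)) (v : Fin n → C) :
    bProd C f v 0 * ∏ j : Fin m, bProd C f v j.succ = ∏ i, v i := by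
  have h1 : ∏ j : Fin (m+1), bProd C f v j = ∏ i, v i := by
    exact Finset.prod_fiberwise_of_maps_to (fun x _ => Finset.mem_univ (f.1 x.succ)) v
  rw [Fin.prod_univ_succ] at h1
  exact h1

/-- The contravariant action of `G^*(C,M)` on a pointed map `f : [n] → [m]`:
`(f^*ξ)(a_1,...,a_n) = (b_0)_*(ξ(b_1,...,b_m))`. -/
noncomputable def GcoMap (M : LeftHModK C K) {n m : ℕ}
    (f : (n : GammaCat) ⟶ (m : GammaCat)) (ξ : GcoObj C K M m) : GcoObj C K M n :=
  fun v => M.map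
    (⟨bProd C f v 0, bProd_mul C f v⟩ :
      HCat.of (∏ j : Fin m, bProd C f v j.succ) ⟶ HCat.of (∏ i, v i))
    (ξ (fun j : Fin m => bProd C f v j.succ))

/-! The tuple `(b_0, …, b_m)` is the pushforward `fiberProd (f ∘ succ) a` of the weights `a`
along `f`, and pushforwards compose: `fiberProd (ψ ∘ φ) = fiberProd ψ ∘ fiberProd φ`. Splitting
off the basepoint fibre of `g` shows that for `f ≫ g` the new `b_0` is `b_0(f) · b_0(g)`, while
its `b_1, …, b_l` are those of `g` evaluated at `(b_1(f), …, b_m(f))`. Functoriality of `M` on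
`H(C)` turns this into `(f ≫ g)^* = f^* ∘ g^*`; for the identity, `b_0 = 1` and `b_j = a_j`. -/

section FiberProd

variable {ι κ ν N : Type*} [CommMonoid N] [Fintype ι] [DecidableEq κ]

def fiberProd (φ : ι → κ) (u : ι → N) (k : κ) : N :=
  ∏ i ∈ Finset.univ.filter (fun i => φ i = k), u i

theorem fiberProd_comp [Fintype κ] [DecidableEq ν] (ψ : κ → ν) (φ : ι → κ) (u : ι → N) :
    fiberProd (ψ ∘ φ) u = fiberProd ψ (fiberProd φ u) := by
  ext l
  simp only [fiberProd]
  rw [Finset.prod_fiberwise_eq_prod_filter]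
  simp

theorem fiberProd_fin_succ {m : ℕ} (g : Fin (m+1) → κ) (u : Fin (m+1) → N) :
    fiberProd g u = Pi.mulSingle (g 0) (u 0) * fiberProd (g ∘ Fin.succ) (Fin.tail u) := by
  ext k
  simp only [fiberProd, Finset.prod_filter, Fin.prod_univ_succ, Pi.mul_apply,
    Pi.mulSingle_apply, eq_comm (a := k), Function.comp_apply, Fin.tail]

theorem fiberProd_apply_of_injective {φ : ι → κ} (hφ : φ.Injective) (u : ι → N) (i : ι) :
    fiberProd φ u (φ i) = u i := by
  refine Finset.prod_eq_single_of_mem i (by simp) fun j hj hji => ?_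
  exact absurd (hφ (Finset.mem_filter.1 hj).2) hji

theorem fiberProd_eq_one_of_forall_ne {φ : ι → κ} (u : ι → N) {k : κ} (hk : ∀ i, φ i ≠ k) :
    fiberProd φ u k = 1 := by
  simp [fiberProd, hk]

end FiberProd

section BProd

variable {n m l : ℕ}

theorem bProd_eq_fiberProd (f : (n : GammaCat) ⟶ (m : GammaCat)) (v : Fin n → C) :
    bProd C f v = fiberProd (f.1 ∘ Fin.succ) v :=
  rfl

theorem bProd_id_zero (v : Fin n → C) : bProd C (𝟙 (n : GammaCat)) v 0 = 1 :=
  fiberProd_eq_one_of_forall_ne v Fin.succ_ne_zero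

theorem tail_bProd_id (v : Fin n → C) : Fin.tail (bProd C (𝟙 (n : GammaCat)) v) = v :=
  funext (fiberProd_apply_of_injective (Fin.succ_injective n) v)

theorem bProd_comp (f : (n : GammaCat) ⟶ (m : GammaCat)) (g : (m : GammaCat) ⟶ (l : GammaCat))
    (v : Fin n → C) :
    bProd C (f ≫ g) v = Pi.mulSingle 0 (bProd C f v 0) * bProd C g (Fin.tail (bProd C f v)) := by
  rw [bProd_eq_fiberProd, bProd_eq_fiberProd, bProd_eq_fiberProd]
  change fiberProd (g.1 ∘ f.1 ∘ Fin.succ) v = _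
  rw [fiberProd_comp, fiberProd_fin_succ, g.2]

theorem bProd_comp_zero (f : (n : GammaCat) ⟶ (m : GammaCat))
    (g : (m : GammaCat) ⟶ (l : GammaCat)) (v : Fin n → C) :
    bProd C (f ≫ g) v 0 = bProd C f v 0 * bProd C g (Fin.tail (bProd C f v)) 0 := by
  rw [bProd_comp, Pi.mul_apply, Pi.mulSingle_eq_same]

theorem tail_bProd_comp (f : (n : GammaCat) ⟶ (m : GammaCat))
    (g : (m : GammaCat) ⟶ (l : GammaCat)) (v : Fin n → C) :
    Fin.tail (bProd C (f ≫ g) v) = Fin.tail (bProd C g (Fin.tail (bProd C f v))) := by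
  ext k
  simp [Fin.tail, bProd_comp, Fin.succ_ne_zero]

end BProd

theorem map_mk_mul_apply (M : LeftHModK C K) {a b c s t : C} (hs : s * a = b) (ht : t * b = c)
    (h : t * s * a = c) (x : M.obj (HCat.of a)) :
    M.map (⟨t * s, h⟩ : HCat.of a ⟶ HCat.of c) x
      = M.map (⟨t, ht⟩ : HCat.of b ⟶ HCat.of c) (M.map (⟨s, hs⟩ : HCat.of a ⟶ HCat.of b) x) :=
  congrArg (fun φ => φ.hom x)
    (M.map_comp (X := HCat.of a) (Y := HCat.of b) (Z := HCat.of c) ⟨s, hs⟩ ⟨t, ht⟩)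

theorem GcoMap_apply_eq_map (M : LeftHModK C K) {n m : ℕ} (f : (n : GammaCat) ⟶ (m : GammaCat))
    (ξ : GcoObj C K M m) (v : Fin n → C) {c : C} {w : Fin m → C}
    (hc : bProd C f v 0 = c) (hw : Fin.tail (bProd C f v) = w) (h : c * ∏ j, w j = ∏ i, v i) :
    GcoMap C K M f ξ v = M.map (⟨c, h⟩ : HCat.of (∏ j, w j) ⟶ HCat.of (∏ i, v i)) (ξ w) := by
  subst hc hw
  rfl

/-- `G^*(C, M)` is a well-defined right `Γ`-module: the action on morphisms is
`K`-linear, preserves identities, and is contravariantly functorial. -/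
theorem Gco_is_right_Gamma_module (M : LeftHModK C K) :
    (∀ (n m : ℕ) (f : (n : GammaCat) ⟶ (m : GammaCat)),
      IsLinearMap K (GcoMap C K M f)) ∧
    (∀ (n : ℕ) (ξ : GcoObj C K M n), GcoMap C K M (𝟙 (n : GammaCat)) ξ = ξ) ∧
    (∀ (n m l : ℕ) (f : (n : GammaCat) ⟶ (m : GammaCat))
      (g : (m : GammaCat) ⟶ (l : GammaCat)) (ξ : GcoObj C K M l),
      GcoMap C K M (f ≫ g) ξ = GcoMap C K M f (GcoMap C K M g ξ)) := by
  refine ⟨fun n m f => ⟨fun ξ η => funext fun v => ?_, fun c ξ => funext fun v => ?_⟩,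
    fun n ξ => funext fun v => ?_, fun n m l f g ξ => funext fun v => ?_⟩
  · exact map_add (M.map _).hom _ _
  · exact map_smul (M.map _).hom _ _
  · rw [GcoMap_apply_eq_map C K M _ ξ v (bProd_id_zero C v) (tail_bProd_id C v) (one_mul _)]
    exact congrArg (fun φ => (ModuleCat.Hom.hom φ) (ξ v)) (M.map_id _)
  · have hmul := (mul_assoc _ _ _).trans
      ((congrArg (bProd C f v 0 * ·) (bProd_mul C g _)).trans (bProd_mul C f v))
    rw [GcoMap_apply_eq_map C K M _ ξ v (bProd_comp_zero C f g v) (tail_bProd_comp C f g v) hmul]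
    exact map_mk_mul_apply C K M (bProd_mul C g _) (bProd_mul C f v) _ _
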